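/- arXiv:2408.07591 — 3 statements merged into one kernel-verified Lean document; each statement's English description precedes it below -/
import Mathlib

section
/- Let S be a discrete-time complex-space system with state space 𝒵 ⊆ ℂ^n, initial set 𝒵₀, dynamics f_t : 𝒵 → 𝒵 for each t ∈ ℕ, and unsafe set 𝒵_u. Suppose there exist functions B_t : 𝒵 → ℝ (t ∈ ℕ), an integer k ≥ 1, reals ε, γ ≥ 0 and d > k(ε + γ) such that: (1) B₀(z) ≤ 0 for all z ∈ 𝒵₀; (2) B_t(z) ≥ d for all z ∈ 𝒵_u and all t; (3) B_t(f_t(z)) − B_t(z) ≤ ε for all z ∈ 𝒵 and all t; (4) B_{t+1}(z) − B_t(z) ≤ γ for all z ∈ 𝒵 and all t; (5) B_{t+k}(f_{t+k−1}(…f_{t+1}(f_t(z))…)) − B_t(z) ≤ 0 for all z ∈ 𝒵 and all t that are multiples of k. Then the system is safe: any trajectory z with z₀ ∈ 𝒵₀ and z_{t+1} = f_t(z_t) satisfies z_T ∉ 𝒵_u for all T ∈ ℕ. -/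
/-- `iterDyn f t m z` is `f (t+m-1) (⋯ (f (t+1) (f t z)))`. -/
def iterDyn {α : Type*} (f : ℕ → α → α) (t : ℕ) : ℕ → α → α
  | 0 => id
  | (m + 1) => fun z => f (t + m) (iterDyn f t m z)

/-- k-Inductive Hybrid Barrier Certificates imply safety. -/
theorem stmt1 {n : ℕ} (Z Z0 Zu : Set (Fin n → ℂ))
    (f : ℕ → (Fin n → ℂ) → (Fin n → ℂ))
    (hZ0 : Z0 ⊆ Z) (hZu : Zu ⊆ Z) (hf : ∀ t, ∀ z ∈ Z, f t z ∈ Z)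
    (B : ℕ → (Fin n → ℂ) → ℝ) (k : ℕ) (hk : 1 ≤ k)
    (ε γ d : ℝ) (hε : 0 ≤ ε) (hγ : 0 ≤ γ) (hd : (k : ℝ) * (ε + γ) < d)
    (h1 : ∀ z ∈ Z0, B 0 z ≤ 0)
    (h2 : ∀ t : ℕ, ∀ z ∈ Zu, d ≤ B t z)
    (h3 : ∀ t : ℕ, ∀ z ∈ Z, B t (f t z) - B t z ≤ ε)
    (h4 : ∀ t : ℕ, ∀ z ∈ Z, B (t + 1) z - B t z ≤ γ)
    (h5 : ∀ t : ℕ, (∃ r : ℕ, t = r * k) → ∀ z ∈ Z,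
      B (t + k) (iterDyn f t k z) - B t z ≤ 0) :
    ∀ z : ℕ → Fin n → ℂ, z 0 ∈ Z0 → (∀ t, z (t + 1) = f t (z t)) →
      ∀ T : ℕ, z T ∉ Zu := by
  intro z hz0 hdyn T hTu
  have hmemZ : ∀ t, z t ∈ Z := by
    intro t; induction t with
    | zero => exact hZ0 hz0
    | succ t ih => rw [hdyn t]; exact hf t _ ih
  have hiter : ∀ t m, iterDyn f t m (z t) = z (t + m) := by
    intro t m; induction m with
    | zero => rfl
    | succ m ih =>
      show f (t + m) (iterDyn f t m (z t)) = z (t + (m + 1))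
      rw [ih, ← hdyn (t + m)]
      rfl
  have hstep : ∀ t, B (t + 1) (z (t + 1)) ≤ B t (z t) + (ε + γ) := by
    intro t
    have h3' := h3 t (z t) (hmemZ t)
    have h4' := h4 t (f t (z t)) (hf t _ (hmemZ t))
    rw [hdyn t]; linarith
  have hmult : ∀ r, B (r * k) (z (r * k)) ≤ 0 := by
    intro r; induction r with
    | zero => simpa using h1 _ hz0
    | succ r ih =>
      have h5' := h5 (r * k) ⟨r, rfl⟩ (z (r * k)) (hmemZ _)
      rw [hiter] at h5'
      have heq : (r + 1) * k = r * k + k := by ring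
      rw [heq]; linarith
  have hgen : ∀ t0 j, B (t0 + j) (z (t0 + j)) ≤ B t0 (z t0) + j * (ε + γ) := by
    intro t0 j; induction j with
    | zero => simp
    | succ j ih =>
      have hs := hstep (t0 + j)
      have heq : t0 + (j + 1) = (t0 + j) + 1 := by ring
      rw [heq]
      push_cast
      linarith
  have hT : T = (T / k) * k + T % k := by
    rw [Nat.div_add_mod' T k]
  have hjk : T % k < k := Nat.mod_lt _ hk
  have hB : B T (z T) ≤ ((T % k : ℕ) : ℝ) * (ε + γ) := by
    have hg := hgen ((T / k) * k) (T % k)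
    have hm := hmult (T / k)
    rw [← hT] at hg
    linarith
  have hle : ((T % k : ℕ) : ℝ) * (ε + γ) ≤ (k : ℝ) * (ε + γ) := by
    apply mul_le_mul_of_nonneg_right _ (by linarith)
    exact_mod_cast hjk.le
  have := h2 T (z T) hTu
  linarith
end

section
/- Let S = (𝒵, 𝒵₀, F, f) be a discrete-time complex-space system with 𝒵, 𝒵₀, 𝒵_u described by vectors of real-valued functions g_I, g₀, g_u (as sets {z : g(z) ≥ 0 componentwise}). Suppose there are functions B_t : ℂ^n → ℝ, constants k ≥ 1, ε, γ ≥ 0, d > k(ε+γ), and vectors of nonnegative functions λ_Init, λ_{U;t}, λ_t, λ_{t,t+1}, λ̂_t such that the following functions are nonnegative on all of ℂ^n: (a) −B₀(z) − λ_Init(z)ᵀ g₀(z); (b) B_t(z) − λ_{U;t}(z)ᵀ g_u(z) − d for all t; (c) −B_t(f_t(z)) + B_t(z) − λ_t(z)ᵀ g_I(z) + ε for all t; (d) −B_{t+1}(z) + B_t(z) − λ_{t,t+1}(z)ᵀ g_I(z) + γ for all t; (e) −B_{t+k}(f_{t+k−1}∘…∘f_t(z)) + B_t(z) − λ̂_t(z)ᵀ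 g_I(z) for all t that are multiples of k. Then S is safe with respect to 𝒵_u. -/
/-- HSOS-style relaxation of the k-inductive hybrid barrier conditions implies
safety, with the sets described by vectors of real-valued functions and the
λ multipliers abstracted as nonnegative function vectors. -/
theorem stmt6 {n mI m0 mu : ℕ}
    (gI : (Fin n → ℂ) → Fin mI → ℝ) (g0 : (Fin n → ℂ) → Fin m0 → ℝ)
    (gu : (Fin n → ℂ) → Fin mu → ℝ)
    (f : ℕ → (Fin n → ℂ) → (Fin n → ℂ))
    (hsub : ∀ z, (∀ j, 0 ≤ g0 z j) → ∀ j, 0 ≤ gI z j)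
    (hf : ∀ t z, (∀ j, 0 ≤ gI z j) → ∀ j, 0 ≤ gI (f t z) j)
    (B : ℕ → (Fin n → ℂ) → ℝ) (k : ℕ) (hk : 1 ≤ k)
    (ε γ d : ℝ) (hε : 0 ≤ ε) (hγ : 0 ≤ γ) (hd : (k : ℝ) * (ε + γ) < d)
    (lamInit : (Fin n → ℂ) → Fin m0 → ℝ)
    (lamU : ℕ → (Fin n → ℂ) → Fin mu → ℝ)
    (lam : ℕ → (Fin n → ℂ) → Fin mI → ℝ)
    (lam' : ℕ → (Fin n → ℂ) → Fin mI → ℝ)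
    (lamHat : ℕ → (Fin n → ℂ) → Fin mI → ℝ)
    (hlamInit : ∀ z j, 0 ≤ lamInit z j)
    (hlamU : ∀ t z j, 0 ≤ lamU t z j)
    (hlam : ∀ t z j, 0 ≤ lam t z j)
    (hlam' : ∀ t z j, 0 ≤ lam' t z j)
    (hlamHat : ∀ t z j, 0 ≤ lamHat t z j)
    (ha : ∀ z, 0 ≤ -B 0 z - ∑ j : Fin m0, lamInit z j * g0 z j)
    (hb : ∀ t z, 0 ≤ B t z - (∑ j : Fin mu, lamU t z j * gu z j) - d)
    (hc : ∀ t z, 0 ≤ -B t (f t z) + B t z - (∑ j : Fin mI, lam t z j * gI z j) + ε)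
    (hd' : ∀ t z, 0 ≤ -B (t + 1) z + B t z - (∑ j : Fin mI, lam' t z j * gI z j) + γ)
    (he : ∀ t : ℕ, (∃ r : ℕ, t = r * k) → ∀ z,
      0 ≤ -B (t + k) (iterDyn f t k z) + B t z - ∑ j : Fin mI, lamHat t z j * gI z j) :
    ∀ z : ℕ → Fin n → ℂ, (∀ j, 0 ≤ g0 (z 0) j) → (∀ t, z (t + 1) = f t (z t)) →
      ∀ T : ℕ, ¬ (∀ j, 0 ≤ gu (z T) j) := by

  intro z hz0 hz T hT
  have hZ : ∀ t, ∀ j, 0 ≤ gI (z t) j := by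
    intro t
    induction t with
    | zero => exact hsub _ hz0
    | succ t ih => rw [hz t]; exact hf t _ ih
  have step : ∀ t, B (t+1) (z (t+1)) ≤ B t (z t) + (ε + γ) := by
    intro t
    have h1 := hc t (z t)
    have h2 := hd' t (z (t+1))
    have s1 : 0 ≤ ∑ j : Fin mI, lam t (z t) j * gI (z t) j :=
      Finset.sum_nonneg fun j _ => mul_nonneg (hlam _ _ _) (hZ t _)
    have s2 : 0 ≤ ∑ j : Fin mI, lam' t (z (t+1)) j * gI (z (t+1)) j :=
      Finset.sum_nonneg fun j _ => mul_nonneg (hlam' _ _ _) (hZ _ _)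
    rw [← hz t] at h1
    linarith
  have chain : ∀ t m, B (t+m) (z (t+m)) ≤ B t (z t) + m * (ε + γ) := by
    intro t m
    induction m with
    | zero => simp
    | succ m ih =>
      have hs := step (t+m)
      rw [show t+(m+1) = t+m+1 from rfl]
      push_cast
      linarith
  have hiter : ∀ t m, iterDyn f t m (z t) = z (t + m) := by
    intro t m
    induction m with
    | zero => rfl
    | succ m ih =>
      show f (t+m) (iterDyn f t m (z t)) = z (t+(m+1))
      rw [ih, ← hz (t+m)]
      rfl
  have hmult : ∀ q, B (q*k) (z (q*k)) ≤ 0 := by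
    intro q
    induction q with
    | zero =>
      have h := ha (z 0)
      have s : 0 ≤ ∑ j : Fin m0, lamInit (z 0) j * g0 (z 0) j :=
        Finset.sum_nonneg fun j _ => mul_nonneg (hlamInit _ _) (hz0 _)
      simpa using by linarith
    | succ q ih =>
      have h := he (q*k) ⟨q, rfl⟩ (z (q*k))
      rw [hiter (q*k) k] at h
      have s : 0 ≤ ∑ j : Fin mI, lamHat (q*k) (z (q*k)) j * gI (z (q*k)) j :=
        Finset.sum_nonneg fun j _ => mul_nonneg (hlamHat _ _ _) (hZ _ _)
      have heq : (q+1)*k = q*k + k := by ring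
      rw [heq]
      linarith
  have hr : T % k < k := Nat.mod_lt _ (by omega)
  have hTd : (T / k) * k + T % k = T := Nat.div_add_mod' T k
  have h1 := chain ((T/k)*k) (T % k)
  rw [hTd] at h1
  have h2 := hmult (T/k)
  have hbu := hb T (z T)
  have su : 0 ≤ ∑ j : Fin mu, lamU T (z T) j * gu (z T) j :=
    Finset.sum_nonneg fun j _ => mul_nonneg (hlamU _ _ _) (hT _)
  have hcast : ((T % k : ℕ) : ℝ) * (ε + γ) ≤ (k:ℝ) * (ε+γ) := by
    apply mul_le_mul_of_nonneg_right _ (by linarith)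
    exact_mod_cast Nat.le_of_lt hr
  linarith
end

section
/- The Grover iterate satisfies G^r |φ⟩ = cos((2r+1)θ/2)|¬m⟩ + sin((2r+1)θ/2)|m⟩ for all r ∈ ℕ, where |φ⟩ = (1/√(2^n)) Σ_x |x⟩, sin θ = 2√(2^n − 1)/2^n with 0 ≤ θ ≤ π/2, |¬m⟩ = (1/√(2^n − 1)) Σ_{x≠m} |x⟩, and G = D·O acts on the 2-dimensional real span of |m⟩ and |¬m⟩ as a rotation by angle θ. -/
open Matrix

/-- The uniform superposition state `|φ⟩` on `n` qubits. -/
noncomputable def uniformState (n : ℕ) : Fin (2 ^ n) → ℂ :=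
  fun _ => ((1 / Real.sqrt (2 ^ n) : ℝ) : ℂ)

/-- The basis state `|m⟩`. -/
def basisState (n : ℕ) (m : Fin (2 ^ n)) : Fin (2 ^ n) → ℂ :=
  fun x => if x = m then 1 else 0

/-- The state `|¬m⟩`, the uniform superposition over unmarked elements. -/
noncomputable def notMState (n : ℕ) (m : Fin (2 ^ n)) : Fin (2 ^ n) → ℂ :=
  fun x => if x = m then 0 else ((1 / Real.sqrt ((2 ^ n : ℝ) - 1) : ℝ) : ℂ)

/-- The Grover oracle: `O|x⟩ = (−1)^{h(x)}|x⟩` with unique marked element `m`. -/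
def oracleMat (n : ℕ) (m : Fin (2 ^ n)) : Matrix (Fin (2 ^ n)) (Fin (2 ^ n)) ℂ :=
  Matrix.diagonal fun x => if x = m then -1 else 1

/-- The diffusion operator `D = 2|φ⟩⟨φ| − I`. -/
noncomputable def diffusionMat (n : ℕ) : Matrix (Fin (2 ^ n)) (Fin (2 ^ n)) ℂ :=
  (2 : ℂ) • Matrix.vecMulVec (uniformState n) (star (uniformState n)) - 1

/-- The Grover iterate `G = D·O`. -/
noncomputable def groverMat (n : ℕ) (m : Fin (2 ^ n)) :
    Matrix (Fin (2 ^ n)) (Fin (2 ^ n)) ℂ :=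
  diffusionMat n * oracleMat n m

/-! The oracle fixes `|¬m⟩` and negates `|m⟩`, while `D` is the reflection in the line of
`|φ⟩ = cos(θ/2)|¬m⟩ + sin(θ/2)|m⟩`. On the plane spanned by the orthonormal pair `|¬m⟩, |m⟩` the
product of these two reflections is the rotation by twice the angle between their axes, namely `θ`,
and `|φ⟩` itself sits at angle `θ/2`. The only analytic input is that `sin θ = 2√(2ⁿ-1)/2ⁿ` with
`0 ≤ θ ≤ π/2` forces `cos(θ/2) = √(2ⁿ-1)/√(2ⁿ)` and `sin(θ/2) = 1/√(2ⁿ)`. -/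

section Rotation

variable {ι : Type*} [Fintype ι] [DecidableEq ι]

theorem Matrix.pow_mulVec_cos_smul_add_sin_smul (M : Matrix ι ι ℂ) (u v : ι → ℂ) (θ : ℝ)
    (hu : M *ᵥ u = (Real.cos θ : ℂ) • u + (Real.sin θ : ℂ) • v)
    (hv : M *ᵥ v = (-Real.sin θ : ℂ) • u + (Real.cos θ : ℂ) • v) (α : ℝ) (r : ℕ) :
    (M ^ r) *ᵥ ((Real.cos α : ℂ) • u + (Real.sin α : ℂ) • v) =
      (Real.cos (α + r * θ) : ℂ) • u + (Real.sin (α + r * θ) : ℂ) • v := by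
  induction r with
  | zero => simp
  | succ r ih =>
    rw [pow_succ', ← mulVec_mulVec, ih, mulVec_add, mulVec_smul, mulVec_smul, hu, hv]
    have hangle : α + ↑(r + 1) * θ = (α + r * θ) + θ := by push_cast; ring
    rw [hangle, Real.cos_add (α + r * θ), Real.sin_add (α + r * θ)]
    simp only [Complex.ofReal_add, Complex.ofReal_sub, Complex.ofReal_mul]
    module

theorem Matrix.reflection_mulVec (φ w : ι → ℂ) :
    ((2 : ℂ) • vecMulVec φ (star φ) - 1) *ᵥ w = (2 * (star φ ⬝ᵥ w)) • φ - w := by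
  rw [sub_mulVec, one_mulVec, smul_mulVec, vecMulVec_mulVec, op_smul_eq_smul, smul_smul]

variable {φ u v : ι → ℂ} {O : Matrix ι ι ℂ} {β : ℝ}

theorem Matrix.reflection_mul_mulVec_of_mulVec_eq_self
    (hφ : φ = (Real.cos β : ℂ) • u + (Real.sin β : ℂ) • v) (hu : star φ ⬝ᵥ u = Real.cos β)
    (hOu : O *ᵥ u = u) :
    (((2 : ℂ) • vecMulVec φ (star φ) - 1) * O) *ᵥ u =
      (Real.cos (2 * β) : ℂ) • u + (Real.sin (2 * β) : ℂ) • v := by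
  rw [← mulVec_mulVec, hOu, reflection_mulVec, hu, hφ, Real.cos_two_mul, Real.sin_two_mul]
  push_cast
  module

theorem Matrix.reflection_mul_mulVec_of_mulVec_eq_neg
    (hφ : φ = (Real.cos β : ℂ) • u + (Real.sin β : ℂ) • v) (hv : star φ ⬝ᵥ v = Real.sin β)
    (hOv : O *ᵥ v = -v) :
    (((2 : ℂ) • vecMulVec φ (star φ) - 1) * O) *ᵥ v =
      (-Real.sin (2 * β) : ℂ) • u + (Real.cos (2 * β) : ℂ) • v := by
  rw [← mulVec_mulVec, hOv, mulVec_neg, reflection_mulVec, hv, hφ, Real.cos_two_mul, Real.cos_sq',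
    Real.sin_two_mul]
  push_cast
  module

end Rotation

section HalfAngle

open Real

theorem Real.cos_half_eq_and_sin_half_eq {θ c s : ℝ} (hθ0 : 0 ≤ θ) (hθ1 : θ ≤ π / 2)
    (hs : 0 ≤ s) (hsc : s ≤ c) (hcs : c ^ 2 + s ^ 2 = 1) (hsin : sin θ = 2 * s * c) :
    cos (θ / 2) = c ∧ sin (θ / 2) = s := by
  have hcos : cos θ = c ^ 2 - s ^ 2 := by
    have hsq : cos θ ^ 2 = (c ^ 2 - s ^ 2) ^ 2 := by
      rw [cos_sq', hsin]
      linear_combination -(c ^ 2 + s ^ 2 + 1) * hcs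
    exact (pow_left_inj₀ (cos_nonneg_of_mem_Icc ⟨by linarith [pi_pos], hθ1⟩)
      (by nlinarith) two_ne_zero).1 hsq
  have hθ : θ = 2 * (θ / 2) := by ring
  constructor
  · refine (pow_left_inj₀ (cos_nonneg_of_mem_Icc ⟨by linarith [pi_pos], by linarith [pi_pos]⟩)
      (by linarith) two_ne_zero).1 ?_
    rw [hθ, cos_two_mul] at hcos
    linear_combination hcos / 2 - hcs / 2
  · refine (pow_left_inj₀ (sin_nonneg_of_nonneg_of_le_pi (by linarith) (by linarith [pi_pos]))
      hs two_ne_zero).1 ?_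
    rw [hθ, cos_two_mul, cos_sq'] at hcos
    linear_combination -hcos / 2 - hcs / 2

end HalfAngle

section GroverStates

variable (n : ℕ) (m : Fin (2 ^ n))

theorem oracleMat_mulVec_notMState : oracleMat n m *ᵥ notMState n m = notMState n m := by
  ext x
  by_cases hx : x = m <;> simp [oracleMat, mulVec_diagonal, notMState, hx]

theorem oracleMat_mulVec_basisState : oracleMat n m *ᵥ basisState n m = -basisState n m := by
  ext x
  by_cases hx : x = m <;> simp [oracleMat, mulVec_diagonal, basisState, hx]

theorem star_uniformState_dotProduct (w : Fin (2 ^ n) → ℂ) :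
    star (uniformState n) ⬝ᵥ w = ((1 / √(2 ^ n) : ℝ) : ℂ) * ∑ x, w x := by
  simp [dotProduct, uniformState, Finset.mul_sum]

theorem sum_basisState : ∑ x, basisState n m x = 1 := by
  simp [basisState]

theorem sum_notMState : ∑ x, notMState n m x = ((√(2 ^ n - 1) : ℝ) : ℂ) := by
  simp only [notMState, Finset.sum_ite, Finset.filter_ne', Finset.sum_const_zero, zero_add,
    Finset.sum_const, Finset.card_erase_of_mem (Finset.mem_univ m), Finset.card_univ,
    Fintype.card_fin, nsmul_eq_mul]
  push_cast [Nat.one_le_two_pow]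
  exact_mod_cast (mul_one_div _ _).trans (Real.div_sqrt (x := 2 ^ n - 1))

theorem uniformState_eq_smul_notMState_add_smul_basisState :
    uniformState n = ((√(2 ^ n - 1) / √(2 ^ n) : ℝ) : ℂ) • notMState n m +
      ((1 / √(2 ^ n) : ℝ) : ℂ) • basisState n m := by
  ext x
  by_cases hx : x = m
  · simp [uniformState, notMState, basisState, hx]
  · simp only [uniformState, notMState, basisState, hx, Pi.add_apply, Pi.smul_apply, smul_eq_mul,
      if_false, mul_zero, add_zero]
    have hN : (2 : ℝ) ≤ 2 ^ n := by
      have := Fin.val_ne_of_ne hx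
      exact_mod_cast (show 2 ≤ 2 ^ n by omega)
    have hsqrt : (√(2 ^ n - 1 : ℝ) : ℂ) ≠ 0 :=
      Complex.ofReal_ne_zero.2 (Real.sqrt_pos.2 (by linarith)).ne'
    push_cast
    field_simp

end GroverStates

theorem cos_half_and_sin_half_of_sin_eq_grover {n : ℕ} (hn : 1 ≤ n) {θ : ℝ} (hθ0 : 0 ≤ θ)
    (hθ1 : θ ≤ Real.pi / 2) (hsin : Real.sin θ = 2 * √((2 ^ n : ℝ) - 1) / 2 ^ n) :
    Real.cos (θ / 2) = √(2 ^ n - 1) / √(2 ^ n) ∧ Real.sin (θ / 2) = 1 / √(2 ^ n) := by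
  have hN : (2 : ℝ) ≤ 2 ^ n := by
    simpa using pow_le_pow_right₀ (M₀ := ℝ) one_le_two hn
  have hsqrtN : √(2 ^ n : ℝ) ^ 2 = 2 ^ n := Real.sq_sqrt (by linarith)
  have hsqrtN1 : √(2 ^ n - 1 : ℝ) ^ 2 = 2 ^ n - 1 := Real.sq_sqrt (by linarith)
  have hpos : 0 < √(2 ^ n : ℝ) := Real.sqrt_pos.2 (by linarith)
  refine Real.cos_half_eq_and_sin_half_eq hθ0 hθ1 (by positivity) ?_ ?_ ?_
  · exact div_le_div_of_nonneg_right (Real.one_le_sqrt.2 (by linarith)) hpos.le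
  · rw [div_pow, div_pow, hsqrtN, hsqrtN1]
    field_simp
    ring
  · rw [hsin]
    field_simp
    rw [hsqrtN, mul_comm]

/-- Geometric representation of Grover's algorithm:
`G^r|φ⟩ = cos((2r+1)θ/2)|¬m⟩ + sin((2r+1)θ/2)|m⟩`. -/
theorem stmt14 (n : ℕ) (hn : 1 ≤ n) (m : Fin (2 ^ n)) (θ : ℝ)
    (hθ0 : 0 ≤ θ) (hθ1 : θ ≤ Real.pi / 2)
    (hsin : Real.sin θ = 2 * Real.sqrt ((2 ^ n : ℝ) - 1) / 2 ^ n) :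
    ∀ r : ℕ, (groverMat n m ^ r) *ᵥ uniformState n = fun x =>
      ((Real.cos ((2 * (r : ℝ) + 1) * θ / 2) : ℝ) : ℂ) * notMState n m x +
      ((Real.sin ((2 * (r : ℝ) + 1) * θ / 2) : ℝ) : ℂ) * basisState n m x := by
  intro r
  obtain ⟨hcos_half, hsin_half⟩ := cos_half_and_sin_half_of_sin_eq_grover hn hθ0 hθ1 hsin
  have hφ : uniformState n = (Real.cos (θ / 2) : ℂ) • notMState n m +
      (Real.sin (θ / 2) : ℂ) • basisState n m := by
    rw [hcos_half, hsin_half]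
    exact uniformState_eq_smul_notMState_add_smul_basisState n m
  have hθ : 2 * (θ / 2) = θ := by ring
  have hrot := pow_mulVec_cos_smul_add_sin_smul (groverMat n m) _ _ θ
    (hθ ▸ reflection_mul_mulVec_of_mulVec_eq_self hφ
      (by rw [star_uniformState_dotProduct, sum_notMState, hcos_half]; push_cast; ring)
      (oracleMat_mulVec_notMState n m))
    (hθ ▸ reflection_mul_mulVec_of_mulVec_eq_neg hφ
      (by rw [star_uniformState_dotProduct, sum_basisState, hsin_half]; push_cast; ring)
      (oracleMat_mulVec_basisState n m))
    (θ / 2) r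
  have hangle : θ / 2 + r * θ = (2 * r + 1) * θ / 2 := by ring
  rw [← hangle, hφ, hrot]
  rfl
end
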